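/- Let G = (V,E) be a finite simple bipartite graph with bipartition V = V₁ ∪ V₂ (every edge joining V₁ to V₂), and let U ⊆ V. Build the finite simple graph G' = (V',E') with V' = V ∪ {x₁, y₁, z₁, x₂, y₂, z₂} and E' = E ∪ {x₁y₁, y₁z₁, x₂y₂, y₂z₂} ∪ {vx₁ : v ∈ V₁} ∪ {vx₂ : v ∈ V₂}. Let U' = {ux₁ : u ∈ U∩V₁} ∪ {ux₂ : u ∈ U∩V₂} ∪ {x₁y₁, x₂y₂}. Then G' has a minimal edge dominating set S' with U' ⊆ S' if and only if G has a minimal vertex cover S with U ⊆ S. -/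

import Mathlib

/-- Vertices of the graph `G'` built from a bipartite graph `G`: the original vertices
together with the six new vertices `x₁, y₁, z₁, x₂, y₂, z₂`. -/
inductive V14 (V : Type) : Type
  | orig : V → V14 V
  | x1 : V14 V
  | y1 : V14 V
  | z1 : V14 V
  | x2 : V14 V
  | y2 : V14 V
  | z2 : V14 V

/-- Edges of `G'`: the edges of `G`, the two paths `x₁y₁z₁`, `x₂y₂z₂`, and the edges
from `V₁` to `x₁` and from `V₂` to `x₂`. -/
def E14 {V : Type} (G : SimpleGraph V) (V1 V2 : Set V) : Set (Sym2 (V14 V)) :=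
  {e | (∃ u v : V, G.Adj u v ∧ e = s(V14.orig u, V14.orig v)) ∨
       e = s(V14.x1, V14.y1) ∨ e = s(V14.y1, V14.z1) ∨
       e = s(V14.x2, V14.y2) ∨ e = s(V14.y2, V14.z2) ∨
       (∃ v ∈ V1, e = s(V14.orig v, V14.x1)) ∨
       (∃ v ∈ V2, e = s(V14.orig v, V14.x2))}

/-- The pre-solution `U' = {ux₁ : u ∈ U∩V₁} ∪ {ux₂ : u ∈ U∩V₂} ∪ {x₁y₁, x₂y₂}`. -/
def U14 {V : Type} (V1 V2 U : Set V) : Set (Sym2 (V14 V)) :=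
  {e | (∃ u ∈ U ∩ V1, e = s(V14.orig u, V14.x1)) ∨
       (∃ u ∈ U ∩ V2, e = s(V14.orig u, V14.x2)) ∨
       e = s(V14.x1, V14.y1) ∨ e = s(V14.x2, V14.y2)}

/-- `D` dominates every edge of `E`: each edge of `E` is in `D` or shares an endpoint
with an edge of `D`. -/
def EDSDom {V : Type*} (E D : Set (Sym2 V)) : Prop :=
  ∀ e ∈ E, e ∈ D ∨ ∃ f ∈ D, ∃ v : V, v ∈ e ∧ v ∈ f

/-- `S` is a vertex cover of the graph whose edge set is `A`. -/
def IsVertexCoverOf {V : Type*} (A : Set (Sym2 V)) (S : Set V) : Prop :=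
  ∀ e ∈ A, ∃ v ∈ S, v ∈ e

/-!
Every edge of `G'` outside `G` meets `{x₁, y₁, x₂, y₂}`, which the forced edges `x₁y₁, x₂y₂`
dominate; so a set of edges containing `x₁y₁, x₂y₂` dominates `G'` exactly when the vertices of
`G` it touches cover `G`.

In `U14 V1 V2 S` each `v ∈ S` lies on exactly one edge, `vx₁` or `vx₂`; deleting it leaves only
`S \ {v}` touched, which is not a cover when `S` is minimal, and deleting `x₁y₁` (`x₂y₂`) leaves
`y₁z₁` (`y₂z₂`) undominated. Conversely, let `S` be the set of vertices of `G` touched by a minimal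
edge dominating set `S' ⊇ U'`. For `u ∈ U`, deleting `ux₁` or `ux₂` from `S'` still touches
`S \ {u}`, so `S \ {u}` is not a cover and `u` has a neighbour outside `S`. Because of these
neighbours, a cover that is minimal among those between `U` and `S` is a minimal cover.
-/

open Set

section Endpoints

variable {α β : Type*}

def endpoints (D : Set (Sym2 α)) : Set α := {v | ∃ f ∈ D, v ∈ f}

lemma endpoints_mono {D D' : Set (Sym2 α)} (h : D ⊆ D') : endpoints D ⊆ endpoints D' :=
  fun _ ⟨f, hf, hvf⟩ => ⟨f, h hf, hvf⟩

lemma mem_endpoints_sdiff_singleton {D : Set (Sym2 α)} {f : Sym2 α} {v : α}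
    (hv : v ∈ endpoints D) (hvf : v ∉ f) : v ∈ endpoints (D \ {f}) := by
  obtain ⟨g, hg, hvg⟩ := hv
  exact ⟨g, ⟨hg, by rintro rfl; exact hvf hvg⟩, hvg⟩

namespace IsVertexCoverOf

variable {A B : Set (Sym2 α)} {S T : Set α}

lemma mono (h : IsVertexCoverOf A S) (hST : S ⊆ T) : IsVertexCoverOf A T :=
  fun e he => let ⟨v, hv, hve⟩ := h e he; ⟨v, hST hv, hve⟩

lemma anti (h : IsVertexCoverOf B S) (hAB : A ⊆ B) : IsVertexCoverOf A S :=
  fun e he => h e (hAB he)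

lemma preimage_map {f : α → β} {T : Set β} (h : IsVertexCoverOf (Sym2.map f '' A) T) :
    IsVertexCoverOf A (f ⁻¹' T) := by
  intro e he
  obtain ⟨w, hwT, hw⟩ := h _ ⟨e, he, rfl⟩
  obtain ⟨v, hve, rfl⟩ := Sym2.mem_map.1 hw
  exact ⟨v, hwT, hve⟩

end IsVertexCoverOf

lemma edsDom_iff_isVertexCoverOf_endpoints {E D : Set (Sym2 α)} :
    EDSDom E D ↔ IsVertexCoverOf E (endpoints D) := by
  refine ⟨fun h e he => ?_, fun h e he => ?_⟩
  · rcases h e he with heD | ⟨f, hf, v, hve, hvf⟩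
    · induction e using Sym2.ind with
      | _ a b => exact ⟨a, ⟨_, heD, Sym2.mem_mk_left a b⟩, Sym2.mem_mk_left a b⟩
    · exact ⟨v, ⟨f, hf, hvf⟩, hve⟩
  · obtain ⟨v, ⟨f, hf, hvf⟩, hve⟩ := h e he
    exact Or.inr ⟨f, hf, v, hve, hvf⟩

lemma EDSDom.mono {E D D' : Set (Sym2 α)} (h : EDSDom E D) (hDD' : D ⊆ D') : EDSDom E D' :=
  edsDom_iff_isVertexCoverOf_endpoints.2 <|
    (edsDom_iff_isVertexCoverOf_endpoints.1 h).mono (endpoints_mono hDD')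

end Endpoints

section VertexCover

variable {α : Type*} {G : SimpleGraph α} {S : Set α}

lemma exists_adj_notMem_of_not_isVertexCoverOf_sdiff {v : α}
    (hS : IsVertexCoverOf G.edgeSet S) (hv : ¬ IsVertexCoverOf G.edgeSet (S \ {v})) :
    ∃ w, G.Adj v w ∧ w ∉ S := by
  simp only [IsVertexCoverOf, not_forall, not_exists, not_and] at hv
  obtain ⟨e, he, hnot⟩ := hv
  induction e using Sym2.ind with
  | _ a b =>
    obtain ⟨x, hxS, hxe⟩ := hS _ he
    obtain rfl : x = v := by_contra fun hxv => hnot x ⟨hxS, hxv⟩ hxe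
    rw [SimpleGraph.mem_edgeSet] at he
    rcases Sym2.mem_iff.1 hxe with rfl | rfl
    · exact ⟨b, he, fun hb => hnot b ⟨hb, he.ne'⟩ (Sym2.mem_mk_right _ _)⟩
    · exact ⟨a, he.symm, fun ha => hnot a ⟨ha, he.ne⟩ (Sym2.mem_mk_left _ _)⟩

lemma minimal_isVertexCoverOf_iff :
    Minimal (IsVertexCoverOf G.edgeSet) S ↔
      IsVertexCoverOf G.edgeSet S ∧ ∀ v ∈ S, ∃ w, G.Adj v w ∧ w ∉ S := by
  rw [Set.minimal_iff_forall_sdiff_singleton fun _ _ (h : IsVertexCoverOf _ _) hTS => h.mono hTS]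
  refine and_congr_right fun hS => forall₂_congr fun v _ =>
    ⟨exists_adj_notMem_of_not_isVertexCoverOf_sdiff hS, fun ⟨w, hvw, hwS⟩ hcov => ?_⟩
  obtain ⟨x, ⟨hxS, hxv⟩, hx⟩ := hcov s(v, w) hvw
  rcases Sym2.mem_iff.1 hx with rfl | rfl
  exacts [hxv rfl, hwS hxS]

lemma exists_minimal_isVertexCoverOf_of_forall_exists_adj_notMem [Finite α] {U : Set α}
    (hUS : U ⊆ S) (hS : IsVertexCoverOf G.edgeSet S)
    (hU : ∀ u ∈ U, ∃ w, G.Adj u w ∧ w ∉ S) :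
    ∃ T, U ⊆ T ∧ Minimal (IsVertexCoverOf G.edgeSet) T := by
  obtain ⟨T, hTS, hT⟩ := exists_minimal_le_of_wellFoundedLT
    (fun T => U ⊆ T ∧ IsVertexCoverOf G.edgeSet T) S ⟨hUS, hS⟩
  refine ⟨T, hT.1.1, minimal_isVertexCoverOf_iff.2 ⟨hT.1.2, fun v hvT => ?_⟩⟩
  by_cases hvU : v ∈ U
  · obtain ⟨w, hvw, hwS⟩ := hU v hvU
    exact ⟨w, hvw, fun hwT => hwS (hTS hwT)⟩
  · refine exists_adj_notMem_of_not_isVertexCoverOf_sdiff hT.1.2 fun hcov => ?_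
    exact hT.notMem_of_prop_sdiff_singleton ⟨subset_sdiff_singleton hT.1.1 hvU, hcov⟩ hvT

end VertexCover

section Gadget

variable {V : Type} {G : SimpleGraph V} {V1 V2 U S : Set V}

lemma map_orig_edgeSet_subset_E14 : Sym2.map V14.orig '' G.edgeSet ⊆ E14 G V1 V2 := by
  rintro _ ⟨e, he, rfl⟩
  induction e using Sym2.ind with
  | _ a b => exact Or.inl ⟨a, b, he, rfl⟩

lemma isVertexCoverOf_E14_iff {T : Set (V14 V)}
    (hT : {.x1, .y1, .x2, .y2} ⊆ T) :
    IsVertexCoverOf (E14 G V1 V2) T ↔ IsVertexCoverOf G.edgeSet (V14.orig ⁻¹' T) := by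
  refine ⟨fun h => (h.anti map_orig_edgeSet_subset_E14).preimage_map, fun h => ?_⟩
  rintro e (⟨a, b, hab, rfl⟩ | rfl | rfl | rfl | rfl | ⟨v, -, rfl⟩ | ⟨v, -, rfl⟩)
  · obtain ⟨v, hvT, hv⟩ := h s(a, b) hab
    exact ⟨V14.orig v, hvT, by rcases Sym2.mem_iff.1 hv with rfl | rfl <;> simp⟩
  exacts [⟨.x1, hT (by simp), by simp⟩, ⟨.y1, hT (by simp), by simp⟩,
    ⟨.x2, hT (by simp), by simp⟩, ⟨.y2, hT (by simp), by simp⟩,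
    ⟨.x1, hT (by simp), by simp⟩, ⟨.x2, hT (by simp), by simp⟩]

lemma gadget_subset_endpoints {D : Set (Sym2 (V14 V))}
    (h1 : s(.x1, .y1) ∈ D) (h2 : s(.x2, .y2) ∈ D) :
    ({.x1, .y1, .x2, .y2} : Set (V14 V)) ⊆ endpoints D := by
  simp only [insert_subset_iff, singleton_subset_iff]
  exact ⟨⟨_, h1, by simp⟩, ⟨_, h1, by simp⟩, ⟨_, h2, by simp⟩, ⟨_, h2, by simp⟩⟩

lemma x1_y1_mem_U14 : s(.x1, .y1) ∈ U14 V1 V2 S := .inr <| .inr <| .inl rfl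

lemma x2_y2_mem_U14 : s(.x2, .y2) ∈ U14 V1 V2 S := .inr <| .inr <| .inr rfl

lemma U14_subset_E14 : U14 V1 V2 S ⊆ E14 G V1 V2 := by
  rintro e (⟨v, ⟨-, hv⟩, rfl⟩ | ⟨v, ⟨-, hv⟩, rfl⟩ | rfl | rfl)
  exacts [.inr <| .inr <| .inr <| .inr <| .inr <| .inl ⟨v, hv, rfl⟩,
    .inr <| .inr <| .inr <| .inr <| .inr <| .inr ⟨v, hv, rfl⟩, .inr <| .inl rfl,
    .inr <| .inr <| .inr <| .inl rfl]

lemma U14_mono (h : U ⊆ S) : U14 V1 V2 U ⊆ U14 V1 V2 S := by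
  rintro e (⟨v, ⟨hv, hv1⟩, rfl⟩ | ⟨v, ⟨hv, hv2⟩, rfl⟩ | rfl | rfl)
  exacts [.inl ⟨v, ⟨h hv, hv1⟩, rfl⟩, .inr <| .inl ⟨v, ⟨h hv, hv2⟩, rfl⟩,
    .inr <| .inr <| .inl rfl, .inr <| .inr <| .inr rfl]

lemma exists_mem_U14 (hUnion : V1 ∪ V2 = univ) {u : V} (hu : u ∈ U) :
    ∃ h, (h = .x1 ∨ h = .x2) ∧ s(.orig u, h) ∈ U14 V1 V2 U := by
  rcases (hUnion ▸ mem_univ u : u ∈ V1 ∪ V2) with hu1 | hu2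
  exacts [⟨_, .inl rfl, .inl ⟨u, ⟨hu, hu1⟩, rfl⟩⟩, ⟨_, .inr rfl, .inr <| .inl ⟨u, ⟨hu, hu2⟩, rfl⟩⟩]

lemma orig_mem_endpoints_U14_iff (hUnion : V1 ∪ V2 = univ) {v : V} :
    V14.orig v ∈ endpoints (U14 V1 V2 S) ↔ v ∈ S := by
  refine ⟨?_, fun hv => ?_⟩
  · rintro ⟨f, ⟨r, ⟨hr, -⟩, rfl⟩ | ⟨r, ⟨hr, -⟩, rfl⟩ | rfl | rfl, hvf⟩ <;> simp_all
  · obtain ⟨h, -, hmem⟩ := exists_mem_U14 hUnion hv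
    exact ⟨_, hmem, Sym2.mem_mk_left _ _⟩

lemma eq_of_orig_mem_of_mem_U14 (hDisj : V1 ∩ V2 = ∅) {f g : Sym2 (V14 V)} {v : V}
    (hf : f ∈ U14 V1 V2 S) (hg : g ∈ U14 V1 V2 S) (hvf : V14.orig v ∈ f)
    (hvg : V14.orig v ∈ g) : f = g := by
  rcases hf with ⟨r, ⟨-, hr⟩, rfl⟩ | ⟨r, ⟨-, hr⟩, rfl⟩ | rfl | rfl <;>
  rcases hg with ⟨t, ⟨-, ht⟩, rfl⟩ | ⟨t, ⟨-, ht⟩, rfl⟩ | rfl | rfl <;>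
  simp_all [Set.eq_empty_iff_forall_notMem]

lemma exists_adj_notMem_endpoints_of_minimal_edsDom {S' : Set (Sym2 (V14 V))}
    (hS' : Minimal (EDSDom (E14 G V1 V2)) S') (h1 : s(.x1, .y1) ∈ S') (h2 : s(.x2, .y2) ∈ S')
    {u : V} {h : V14 V} (hh : h = .x1 ∨ h = .x2) (hu : s(.orig u, h) ∈ S') :
    ∃ w, G.Adj u w ∧ V14.orig w ∉ endpoints S' := by
  set g : Sym2 (V14 V) := s(.orig u, h)
  have hg1 : s(.x1, .y1) ≠ g := by rcases hh with rfl | rfl <;> simp [g]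
  have hg2 : s(.x2, .y2) ≠ g := by rcases hh with rfl | rfl <;> simp [g]
  have hcov : IsVertexCoverOf G.edgeSet (V14.orig ⁻¹' endpoints S') :=
    (isVertexCoverOf_E14_iff (gadget_subset_endpoints h1 h2)).1
      (edsDom_iff_isVertexCoverOf_endpoints.1 hS'.prop)
  refine exists_adj_notMem_of_not_isVertexCoverOf_sdiff hcov fun hc => ?_
  refine hS'.notMem_of_prop_sdiff_singleton (x := g) ?_ hu
  rw [edsDom_iff_isVertexCoverOf_endpoints,
    isVertexCoverOf_E14_iff (gadget_subset_endpoints (mem_sdiff_singleton.2 ⟨h1, hg1⟩)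
      (mem_sdiff_singleton.2 ⟨h2, hg2⟩))]
  refine hc.mono fun v ⟨hv, hvu⟩ => mem_endpoints_sdiff_singleton hv ?_
  rcases hh with rfl | rfl <;> simpa [g] using hvu

lemma exists_minimal_isVertexCoverOf_of_minimal_edsDom [Finite V] (hUnion : V1 ∪ V2 = univ)
    {S' : Set (Sym2 (V14 V))} (hUS' : U14 V1 V2 U ⊆ S')
    (hS' : Minimal (EDSDom (E14 G V1 V2)) S') :
    ∃ S, U ⊆ S ∧ Minimal (IsVertexCoverOf G.edgeSet) S := by
  have h1 : s(.x1, .y1) ∈ S' := hUS' x1_y1_mem_U14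
  have h2 : s(.x2, .y2) ∈ S' := hUS' x2_y2_mem_U14
  refine exists_minimal_isVertexCoverOf_of_forall_exists_adj_notMem
    (S := V14.orig ⁻¹' endpoints S')
    (fun u hu => endpoints_mono hUS' ((orig_mem_endpoints_U14_iff hUnion).2 hu))
    ((isVertexCoverOf_E14_iff (gadget_subset_endpoints h1 h2)).1
      (edsDom_iff_isVertexCoverOf_endpoints.1 hS'.prop)) fun u hu => ?_
  obtain ⟨h, hh, hmem⟩ := exists_mem_U14 hUnion hu
  exact exists_adj_notMem_endpoints_of_minimal_edsDom hS' h1 h2 hh (hUS' hmem)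

lemma not_isVertexCoverOf_E14_endpoints_U14_sdiff (hUnion : V1 ∪ V2 = univ)
    (hDisj : V1 ∩ V2 = ∅) (hS : Minimal (IsVertexCoverOf G.edgeSet) S)
    {g : Sym2 (V14 V)} (hg : g ∈ U14 V1 V2 S) {t : V} (ht : V14.orig t ∈ g) :
    ¬ IsVertexCoverOf (E14 G V1 V2) (endpoints (U14 V1 V2 S \ {g})) := by
  have hg1 : s(.x1, .y1) ≠ g := by rintro rfl; simp at ht
  have hg2 : s(.x2, .y2) ≠ g := by rintro rfl; simp at ht
  rw [isVertexCoverOf_E14_iff (gadget_subset_endpoints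
    (mem_sdiff_singleton.2 ⟨x1_y1_mem_U14, hg1⟩) (mem_sdiff_singleton.2 ⟨x2_y2_mem_U14, hg2⟩))]
  refine fun hc => hS.notMem_of_prop_sdiff_singleton (hc.mono ?_)
    ((orig_mem_endpoints_U14_iff hUnion).1 ⟨g, hg, ht⟩)
  rintro v ⟨f, ⟨hf, hfg⟩, hvf⟩
  refine ⟨(orig_mem_endpoints_U14_iff hUnion).1 ⟨f, hf, hvf⟩, ?_⟩
  rintro rfl
  exact hfg (eq_of_orig_mem_of_mem_U14 hDisj hf hg hvf ht)

lemma minimal_edsDom_U14 (hUnion : V1 ∪ V2 = univ) (hDisj : V1 ∩ V2 = ∅)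
    (hS : Minimal (IsVertexCoverOf G.edgeSet) S) :
    Minimal (EDSDom (E14 G V1 V2)) (U14 V1 V2 S) := by
  simp only [Set.minimal_iff_forall_sdiff_singleton fun _ _ (h : EDSDom _ _) hTS => h.mono hTS,
    edsDom_iff_isVertexCoverOf_endpoints]
  refine ⟨(isVertexCoverOf_E14_iff (gadget_subset_endpoints x1_y1_mem_U14 x2_y2_mem_U14)).2
    (hS.prop.mono fun v hv => (orig_mem_endpoints_U14_iff hUnion).2 hv), fun g hg hc => ?_⟩
  rcases id hg with ⟨t, -, rfl⟩ | ⟨t, -, rfl⟩ | rfl | rfl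
  any_goals
    exact not_isVertexCoverOf_E14_endpoints_U14_sdiff hUnion hDisj hS hg (Sym2.mem_mk_left _ _) hc
  · obtain ⟨v, ⟨f, ⟨hf, hfg⟩, hvf⟩, hv⟩ := hc s(.y1, .z1) (.inr <| .inr <| .inl rfl)
    rcases Sym2.mem_iff.1 hv with rfl | rfl <;>
      rcases hf with ⟨r, -, rfl⟩ | ⟨r, -, rfl⟩ | rfl | rfl <;> simp_all
  · obtain ⟨v, ⟨f, ⟨hf, hfg⟩, hvf⟩, hv⟩ :=
      hc s(.y2, .z2) (.inr <| .inr <| .inr <| .inr <| .inl rfl)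
    rcases Sym2.mem_iff.1 hv with rfl | rfl <;>
      rcases hf with ⟨r, -, rfl⟩ | ⟨r, -, rfl⟩ | rfl | rfl <;> simp_all

end Gadget

theorem stmt_14 {V : Type} [Fintype V] (G : SimpleGraph V)
    (V1 V2 : Set V) (hUnion : V1 ∪ V2 = Set.univ) (hDisj : V1 ∩ V2 = ∅)
    (U : Set V) :
    (∃ S' : Set (Sym2 (V14 V)), S' ⊆ E14 G V1 V2 ∧ U14 V1 V2 U ⊆ S' ∧
        EDSDom (E14 G V1 V2) S' ∧
        ∀ D' : Set (Sym2 (V14 V)), D' ⊂ S' → ¬ EDSDom (E14 G V1 V2) D') ↔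
      (∃ S : Set V, U ⊆ S ∧ IsVertexCoverOf G.edgeSet S ∧
        ∀ S'' : Set V, S'' ⊂ S → ¬ IsVertexCoverOf G.edgeSet S'') := by
  simp only [← Set.minimal_iff_forall_ssubset]
  constructor
  · rintro ⟨S', -, hUS', hS'⟩
    exact exists_minimal_isVertexCoverOf_of_minimal_edsDom hUnion hUS' hS'
  · rintro ⟨S, hUS, hS⟩
    exact ⟨U14 V1 V2 S, U14_subset_E14, U14_mono hUS, minimal_edsDom_U14 hUnion hDisj hS⟩
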